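/- arXiv:1511.01041 — 2 statements merged into one kernel-verified Lean document; each statement's English description precedes it below -/
import Mathlib

section
/- Let m be a real number and let B : ℝⁿ → ℂ be a smooth function such that for every λ > 0 the function η ↦ B(δ_λ(η)) − λ^m · B(η) belongs to the Schwartz space 𝒮(ℝⁿ). Then for all multi-indices a, b ∈ ℕⁿ there is a constant C ≥ 0 such that |η^a ∂^b B(η)| ≤ C (1 + ‖η‖_H)^{m + |a|_H − |b|_H} for all η ∈ ℝⁿ. -/
open scoped BigOperators

/-- Graded dilation `δ_λ` on `ℝⁿ` with integer weights `d`. -/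
noncomputable def dil {n : ℕ} (d : Fin n → ℕ) (lam : ℝ) (η : Fin n → ℝ) : Fin n → ℝ :=
  fun i => lam ^ (d i) * η i

/-- Homogeneous norm `‖η‖_H = max_i |η_i|^(1/d_i)`. -/
noncomputable def hnorm {n : ℕ} (d : Fin n → ℕ) (η : Fin n → ℝ) : ℝ :=
  ⨆ i, |η i| ^ ((d i : ℝ)⁻¹)

/-- Homogeneous order `|b|_H = ∑ i, b i * d i` of a multi-index. -/
def horder {n : ℕ} (d : Fin n → ℕ) (b : Fin n → ℕ) : ℕ := ∑ i, b i * d i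

/-- Monomial `η^a = ∏ i, η i ^ a i`. -/
def mono {n : ℕ} (a : Fin n → ℕ) (η : Fin n → ℝ) : ℝ := ∏ i, η i ^ a i

/-- Partial derivative in the `i`-th coordinate direction. -/
noncomputable def pd {n : ℕ} (i : Fin n) (f : (Fin n → ℝ) → ℂ) : (Fin n → ℝ) → ℂ :=
  fun x => fderiv ℝ f x (Pi.single i 1)

/-- Iterated partial derivative `∂^b` associated to the multi-index `b`. -/
noncomputable def mpd {n : ℕ} (b : Fin n → ℕ) (f : (Fin n → ℝ) → ℂ) : (Fin n → ℝ) → ℂ :=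
  ((List.finRange n).foldr (fun i g => (pd i)^[b i] ∘ g) id) f


variable {n : ℕ} {d : Fin n → ℕ}

lemma dil_dil (lam mu : ℝ) (η : Fin n → ℝ) :
    dil d lam (dil d mu η) = dil d (lam * mu) η := by
  funext i; simp only [dil, mul_pow]; ring

lemma dil_one (η : Fin n → ℝ) : dil d 1 η = η := by funext i; simp [dil]

lemma hnorm_nonneg (η : Fin n → ℝ) : 0 ≤ hnorm d η :=
  Real.iSup_nonneg fun i => Real.rpow_nonneg (abs_nonneg _) _

lemma hnorm_dil (hd : ∀ i, 1 ≤ d i) {lam : ℝ} (hlam : 0 < lam) (η : Fin n → ℝ) :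
    hnorm d (dil d lam η) = lam * hnorm d η := by
  unfold hnorm
  rw [Real.mul_iSup_of_nonneg hlam.le]
  congr 1; funext i
  have hk : d i ≠ 0 := Nat.one_le_iff_ne_zero.mp (hd i)
  show |lam ^ d i * η i| ^ ((d i : ℝ)⁻¹) = lam * |η i| ^ ((d i : ℝ)⁻¹)
  rw [abs_mul, abs_of_pos (pow_pos hlam _), Real.mul_rpow (by positivity) (abs_nonneg _),
    ← Real.rpow_natCast lam (d i), ← Real.rpow_mul hlam.le,
    mul_inv_cancel₀ (by exact_mod_cast hk), Real.rpow_one]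

lemma abs_le_hnorm_pow (hd : ∀ i, 1 ≤ d i) (η : Fin n → ℝ) (i : Fin n) :
    |η i| ≤ hnorm d η ^ d i := by
  have hk : d i ≠ 0 := Nat.one_le_iff_ne_zero.mp (hd i)
  have h1 : |η i| ^ ((d i : ℝ)⁻¹) ≤ hnorm d η :=
    le_ciSup (f := fun j => |η j| ^ ((d j : ℝ)⁻¹))
      (Set.Finite.bddAbove (Set.finite_range _)) i
  calc |η i| = (|η i| ^ ((d i : ℝ)⁻¹)) ^ d i := (Real.rpow_inv_natCast_pow (abs_nonneg _) hk).symm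
    _ ≤ hnorm d η ^ d i := pow_le_pow_left₀ (Real.rpow_nonneg (abs_nonneg _) _) h1 _

lemma hnorm_le (hd : ∀ i, 1 ≤ d i) (η : Fin n → ℝ) : hnorm d η ≤ 1 + ‖η‖ := by
  apply Real.iSup_le _ (by positivity)
  intro i
  have h2 : |η i| ≤ ‖η‖ := by
    simpa using norm_le_pi_norm η i
  rcases le_or_gt (|η i|) 1 with h | h
  · calc |η i| ^ ((d i : ℝ)⁻¹) ≤ 1 := Real.rpow_le_one (abs_nonneg _) h (by positivity)
      _ ≤ 1 + ‖η‖ := by simp [norm_nonneg]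
  · have h3 : |η i| ^ ((d i : ℝ)⁻¹) ≤ |η i| ^ (1:ℝ) := by
      apply Real.rpow_le_rpow_of_exponent_le h.le
      rw [inv_le_one₀ (by exact_mod_cast Nat.lt_of_lt_of_le Nat.zero_lt_one (hd i))]
      exact_mod_cast hd i
    rw [Real.rpow_one] at h3
    linarith

lemma norm_le_of_hnorm_le (hd : ∀ i, 1 ≤ d i) {η : Fin n → ℝ} {R : ℝ} (hR : 1 ≤ R)
    {D : ℕ} (hD : ∀ i, d i ≤ D) (h : hnorm d η ≤ R) : ‖η‖ ≤ R ^ D := by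
  apply (pi_norm_le_iff_of_nonneg (by positivity)).2
  intro i
  calc ‖η i‖ = |η i| := rfl
    _ ≤ hnorm d η ^ d i := abs_le_hnorm_pow hd η i
    _ ≤ R ^ d i := pow_le_pow_left₀ (hnorm_nonneg _) h _
    _ ≤ R ^ D := pow_le_pow_right₀ hR (hD i)


/-- The dilation as a continuous linear map. -/
noncomputable def dilCLM (d : Fin n → ℕ) (lam : ℝ) : (Fin n → ℝ) →L[ℝ] (Fin n → ℝ) :=
  ContinuousLinearMap.pi fun i => (lam ^ d i) • (ContinuousLinearMap.proj i)

lemma dilCLM_apply (d : Fin n → ℕ) (lam : ℝ) (η : Fin n → ℝ) :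
    dilCLM d lam η = dil d lam η := rfl

lemma dilCLM_single (d : Fin n → ℕ) (lam : ℝ) (i : Fin n) :
    dilCLM d lam (Pi.single i 1) = (lam ^ d i) • (Pi.single i 1 : Fin n → ℝ) := by
  funext j
  simp only [dilCLM_apply, dil, Pi.smul_apply, smul_eq_mul]
  rcases eq_or_ne j i with rfl | hji
  · simp
  · simp [Pi.single_eq_of_ne hji]

def Good (d : Fin n → ℕ) (m : ℝ) (B : (Fin n → ℝ) → ℂ) : Prop :=
  ContDiff ℝ (⊤ : ℕ∞) B ∧ ∀ lam : ℝ, 0 < lam → ∃ ψ : SchwartzMap (Fin n → ℝ) ℂ,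
    ∀ η, B (dil d lam η) - ((lam ^ m : ℝ) : ℂ) * B η = ψ η

lemma Good.contDiff_pd {d : Fin n → ℕ} {m : ℝ} {B} (h : Good d m B) (i : Fin n) :
    ContDiff ℝ (⊤ : ℕ∞) (pd i B) := by
  exact (h.1.fderiv_right (m := (⊤ : ℕ∞)) (by simp)).clm_apply
    (contDiff_const (c := (Pi.single i 1 : Fin n → ℝ)))

lemma Good.pdGood {d : Fin n → ℕ} (hd : ∀ i, 1 ≤ d i) {m : ℝ} {B} (h : Good d m B) (i : Fin n) :
    Good d (m - d i) (pd i B) := by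
  refine ⟨h.contDiff_pd i, fun lam hlam => ?_⟩
  obtain ⟨ψ, hψ⟩ := h.2 lam hlam
  have hBd : Differentiable ℝ B := h.1.differentiable (by simp)
  have hψd : Differentiable ℝ (⇑ψ) := ψ.differentiable
  have hkey : (B ∘ ⇑(dilCLM d lam)) = fun x => ((lam ^ m : ℝ) : ℂ) * B x + ψ x := by
    funext x
    have := hψ x
    simp only [Function.comp_apply, dilCLM_apply]
    linear_combination this
  refine ⟨((lam ^ d i : ℝ)⁻¹) • (LineDeriv.lineDerivOpCLM ℝ (SchwartzMap (Fin n → ℝ) ℂ) (Pi.single i 1 : Fin n → ℝ) ψ), fun η => ?_⟩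
  have hfd : fderiv ℝ (B ∘ ⇑(dilCLM d lam)) η (Pi.single i 1)
      = fderiv ℝ (fun x => ((lam ^ m : ℝ) : ℂ) * B x + ψ x) η (Pi.single i 1) := by
    rw [hkey]
  -- LHS
  have hL : fderiv ℝ (B ∘ ⇑(dilCLM d lam)) η (Pi.single i 1)
      = (lam ^ d i : ℝ) • pd i B (dil d lam η) := by
    rw [fderiv_comp (x := η) (hBd _) (dilCLM d lam).differentiableAt,
      (dilCLM d lam).fderiv]
    simp only [ContinuousLinearMap.coe_comp', Function.comp_apply, dilCLM_single]
    rw [map_smul]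
    rfl
  -- RHS
  have hR : fderiv ℝ (fun x => ((lam ^ m : ℝ) : ℂ) * B x + ψ x) η (Pi.single i 1)
      = ((lam ^ m : ℝ) : ℂ) * pd i B η + pd i (⇑ψ) η := by
    rw [fderiv_fun_add ((hBd η).const_mul _) (hψd η), fderiv_const_mul (hBd η)]
    simp only [ContinuousLinearMap.add_apply, ContinuousLinearMap.coe_smul',
      Pi.smul_apply, smul_eq_mul]
    rfl
  rw [hL, hR] at hfd
  have hpos : (0:ℝ) < lam ^ d i := pow_pos hlam _
  have hne : ((lam ^ d i : ℝ) : ℂ) ≠ 0 := by exact_mod_cast ne_of_gt hpos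
  have hpd : pd i (⇑ψ) η = LineDeriv.lineDerivOpCLM ℝ (SchwartzMap (Fin n → ℝ) ℂ) (Pi.single i 1 : Fin n → ℝ) ψ η := by
    rw [LineDeriv.lineDerivOpCLM_apply]; rfl
  have hexp : ((lam ^ (m - (d i : ℝ)) : ℝ) : ℂ)
      = ((lam ^ m : ℝ) : ℂ) * (((lam ^ d i : ℝ) : ℂ))⁻¹ := by
    rw [Real.rpow_sub hlam, Real.rpow_natCast]
    push_cast
    ring
  rw [Complex.real_smul] at hfd
  have hcoe := hfd
  have h2 : pd i B (dil d lam η)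
      = (((lam ^ d i : ℝ) : ℂ))⁻¹ * (((lam ^ d i : ℝ) : ℂ) * pd i B (dil d lam η)) :=
    (inv_mul_cancel_left₀ hne _).symm
  show pd i B (dil d lam η) - _ = _
  rw [SchwartzMap.smul_apply, ← hpd, h2, hcoe, hexp, Complex.real_smul]
  push_cast
  ring

lemma Good.congrExp {d : Fin n → ℕ} {m m' : ℝ} {B} (h : Good d m B) (e : m = m') :
    Good d m' B := e ▸ h

lemma Good.iter {d : Fin n → ℕ} (hd : ∀ i, 1 ≤ d i) {m : ℝ} {B} (h : Good d m B)
    (i : Fin n) (k : ℕ) : Good d (m - k * d i) ((pd i)^[k] B) := by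
  induction k with
  | zero => simpa using h
  | succ k ih =>
    rw [Function.iterate_succ_apply']
    exact ((ih).pdGood hd i).congrExp (by push_cast; ring)

lemma Good.foldr {d : Fin n → ℕ} (hd : ∀ i, 1 ≤ d i) {m : ℝ} {B} (h : Good d m B)
    (b : Fin n → ℕ) (L : List (Fin n)) :
    Good d (m - (((L.map fun i => b i * d i).sum : ℕ) : ℝ))
      ((L.foldr (fun i g => (pd i)^[b i] ∘ g) id) B) := by
  induction L with
  | nil => simpa using h
  | cons i L ih =>
    have e : (List.foldr (fun i g => (pd i)^[b i] ∘ g) id (i :: L)) B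
        = (pd i)^[b i] ((List.foldr (fun i g => (pd i)^[b i] ∘ g) id L) B) := rfl
    rw [e]
    exact (ih.iter hd i (b i)).congrExp
      (by push_cast [List.map_cons, List.sum_cons]; ring)

lemma schwartz_decay_hnorm {d : Fin n → ℕ} (hd : ∀ i, 1 ≤ d i)
    (ψ : SchwartzMap (Fin n → ℝ) ℂ) (N : ℕ) :
    ∃ C, 0 ≤ C ∧ ∀ x, ‖ψ x‖ * (1 + hnorm d x) ^ N ≤ C := by
  obtain ⟨C0, hC0pos, h0⟩ := ψ.decay 0 0
  obtain ⟨CN, hCNpos, hN⟩ := ψ.decay N 0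
  refine ⟨4 ^ N * (C0 + CN), by positivity, fun x => ?_⟩
  have h0' : ‖ψ x‖ ≤ C0 := by simpa [norm_iteratedFDeriv_zero] using h0 x
  have hN' : ‖x‖ ^ N * ‖ψ x‖ ≤ CN := by simpa [norm_iteratedFDeriv_zero] using hN x
  have hx0 : (0:ℝ) ≤ ‖x‖ := norm_nonneg x
  have h1 : 1 + hnorm d x ≤ 2 * (1 + ‖x‖) := by
    have := hnorm_le hd x; linarith
  have h2 : (1 + hnorm d x) ^ N ≤ 2 ^ N * (1 + ‖x‖) ^ N := by
    calc (1 + hnorm d x) ^ N ≤ (2 * (1 + ‖x‖)) ^ N :=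
          pow_le_pow_left₀ (by have := hnorm_nonneg (d := d) x; linarith) h1 N
      _ = 2 ^ N * (1 + ‖x‖) ^ N := mul_pow _ _ _
  have h3 : (1 + ‖x‖) ^ N ≤ 2 ^ N * (1 + ‖x‖ ^ N) := by
    rcases le_total (‖x‖) 1 with h | h
    · have hA : (1 + ‖x‖) ^ N ≤ 2 ^ N := pow_le_pow_left₀ (by linarith) (by linarith) N
      have hB : (0:ℝ) ≤ ‖x‖ ^ N := by positivity
      nlinarith [pow_pos (by norm_num : (0:ℝ) < 2) N]
    · have hA : (1 + ‖x‖) ^ N ≤ (2 * ‖x‖) ^ N := pow_le_pow_left₀ (by linarith) (by linarith) N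
      have : (2 * ‖x‖) ^ N = 2 ^ N * ‖x‖ ^ N := mul_pow _ _ _
      nlinarith [pow_pos (by norm_num : (0:ℝ) < 2) N, pow_nonneg hx0 N]
  have hψ0 : (0:ℝ) ≤ ‖ψ x‖ := norm_nonneg _
  have h4 : (1 + hnorm d x) ^ N ≤ 4 ^ N * (1 + ‖x‖ ^ N) := by
    calc (1 + hnorm d x) ^ N ≤ 2 ^ N * (1 + ‖x‖) ^ N := h2
      _ ≤ 2 ^ N * (2 ^ N * (1 + ‖x‖ ^ N)) := by
          apply mul_le_mul_of_nonneg_left h3 (by positivity)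
      _ = 4 ^ N * (1 + ‖x‖ ^ N) := by rw [← mul_assoc, ← mul_pow]; norm_num
  calc ‖ψ x‖ * (1 + hnorm d x) ^ N ≤ ‖ψ x‖ * (4 ^ N * (1 + ‖x‖ ^ N)) :=
        mul_le_mul_of_nonneg_left h4 hψ0
    _ = 4 ^ N * (‖ψ x‖ + ‖x‖ ^ N * ‖ψ x‖) := by ring
    _ ≤ 4 ^ N * (C0 + CN) := by
        apply mul_le_mul_of_nonneg_left (by linarith) (by positivity)

lemma two_rpow_mul_eq (a b : ℝ) : (2:ℝ) ^ a * (2:ℝ) ^ b = (2:ℝ) ^ (a + b) :=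
  (Real.rpow_add two_pos a b).symm

lemma bound_of_good {d : Fin n → ℕ} (hd : ∀ i, 1 ≤ d i) {m : ℝ}
    {B : (Fin n → ℝ) → ℂ} (h : Good d m B) :
    ∃ C, 0 ≤ C ∧ ∀ η, ‖B η‖ ≤ C * (1 + hnorm d η) ^ m := by
  classical
  obtain ⟨ψ, hψ⟩ := h.2 2 two_pos
  set D : ℕ := Finset.univ.sup d with hDdef
  have hdD : ∀ i, d i ≤ D := fun i => Finset.le_sup (Finset.mem_univ i)
  obtain ⟨C0, hC0⟩ := (isCompact_closedBall (0 : Fin n → ℝ) (2 ^ D)).exists_bound_of_continuousOn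
      (h.1.continuous.continuousOn)
  set C1 : ℝ := max C0 0 with hC1def
  have hC1 : 0 ≤ C1 := le_max_right _ _
  have hball : ∀ η, hnorm d η ≤ 2 → ‖B η‖ ≤ C1 := by
    intro η hη
    have h2 : ‖η‖ ≤ (2:ℝ) ^ D := norm_le_of_hnorm_le hd one_le_two hdD hη
    exact le_trans (hC0 η (by simpa [Metric.mem_closedBall, dist_zero_right] using h2))
      (le_max_left _ _)
  set N : ℕ := ⌈|m|⌉₊ + 1 with hNdef
  have hmN : 1 ≤ m + N := by
    have h1 : |m| ≤ (⌈|m|⌉₊ : ℝ) := Nat.le_ceil _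
    have h2 : -m ≤ |m| := neg_le_abs m
    have h3 : (N:ℝ) = (⌈|m|⌉₊ : ℝ) + 1 := by rw [hNdef]; push_cast; ring
    linarith
  obtain ⟨Cp, hCp0, hCp⟩ := schwartz_decay_hnorm hd ψ N
  set r : ℝ := (2:ℝ) ^ (-(m + N)) with hrdef
  have hr0 : 0 < r := Real.rpow_pos_of_pos two_pos _
  have hhalf : (1:ℝ)/2 = (2:ℝ) ^ (-1:ℝ) := by
    rw [Real.rpow_neg_one]; norm_num
  have hr2 : r ≤ 1/2 := by
    rw [hrdef, hhalf]
    exact Real.rpow_le_rpow_of_exponent_le one_le_two (by linarith)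
  set E : ℝ := (2:ℝ) ^ (1 - m) * Cp with hEdef
  have hE0 : 0 ≤ E := mul_nonneg (Real.rpow_nonneg two_pos.le _) hCp0
  have main : ∀ k : ℕ, ∀ η : Fin n → ℝ, 1 ≤ hnorm d η → hnorm d η ≤ 2 →
      ‖B (dil d ((2:ℝ) ^ k) η)‖ ≤ (2:ℝ) ^ ((k:ℝ) * m) * (C1 + E * (1 - r ^ k)) := by
    intro k
    induction k with
    | zero =>
      intro η h1 h2
      simpa [dil_one, Real.rpow_zero] using hball η h2
    | succ k ih =>
      intro η h1 h2
      have ihk := ih η h1 h2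
      have hpk : (0:ℝ) < (2:ℝ) ^ k := by positivity
      have hζ : hnorm d (dil d ((2:ℝ) ^ k) η) = (2:ℝ) ^ k * hnorm d η :=
        hnorm_dil hd hpk η
      have hcomp : dil d 2 (dil d ((2:ℝ) ^ k) η) = dil d ((2:ℝ) ^ (k+1)) η := by
        rw [dil_dil, pow_succ]; ring_nf
      -- step inequality
      have hstep : ‖B (dil d ((2:ℝ) ^ (k+1)) η)‖
          ≤ (2:ℝ) ^ m * ‖B (dil d ((2:ℝ) ^ k) η)‖ + ‖ψ (dil d ((2:ℝ) ^ k) η)‖ := by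
        rw [← hcomp]
        have heq : B (dil d 2 (dil d ((2:ℝ) ^ k) η))
            = (((2:ℝ) ^ m : ℝ) : ℂ) * B (dil d ((2:ℝ) ^ k) η) + ψ (dil d ((2:ℝ) ^ k) η) := by
          have := hψ (dil d ((2:ℝ) ^ k) η)
          linear_combination this
        rw [heq]
        calc ‖_ + _‖ ≤ ‖(((2:ℝ) ^ m : ℝ) : ℂ) * B (dil d ((2:ℝ) ^ k) η)‖
              + ‖ψ (dil d ((2:ℝ) ^ k) η)‖ := norm_add_le _ _
          _ = (2:ℝ) ^ m * ‖B (dil d ((2:ℝ) ^ k) η)‖ + ‖ψ (dil d ((2:ℝ) ^ k) η)‖ := by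
              rw [norm_mul, Complex.norm_real, Real.norm_eq_abs,
                abs_of_pos (Real.rpow_pos_of_pos two_pos m)]
      -- Schwartz term bound
      have hψb : ‖ψ (dil d ((2:ℝ) ^ k) η)‖ ≤ Cp * ((2:ℝ) ^ ((k:ℝ) * N))⁻¹ := by
        have hp := hCp (dil d ((2:ℝ) ^ k) η)
        have hlow : (2:ℝ) ^ k ≤ hnorm d (dil d ((2:ℝ) ^ k) η) := by
          rw [hζ]; nlinarith
        have hpow : (2:ℝ) ^ ((k:ℝ) * N) ≤ (1 + hnorm d (dil d ((2:ℝ) ^ k) η)) ^ N := by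
          have e1 : (2:ℝ) ^ ((k:ℝ) * (N:ℝ)) = ((2:ℝ) ^ k) ^ N := by
            rw [Real.rpow_mul two_pos.le, Real.rpow_natCast, Real.rpow_natCast]
          rw [e1]
          exact pow_le_pow_left₀ hpk.le (by linarith) N
        have hposN : (0:ℝ) < (2:ℝ) ^ ((k:ℝ) * N) := Real.rpow_pos_of_pos two_pos _
        have h2p : ‖ψ (dil d ((2:ℝ) ^ k) η)‖ * (2:ℝ) ^ ((k:ℝ) * N) ≤ Cp :=
          le_trans (mul_le_mul_of_nonneg_left hpow (norm_nonneg _)) hp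
        rw [← div_eq_mul_inv]
        exact (le_div_iff₀ hposN).2 h2p
      -- key constant inequality
      have hCkey : Cp * ((2:ℝ) ^ ((k:ℝ) * N))⁻¹
          ≤ (2:ℝ) ^ (((k:ℝ) + 1) * m) * (E * (r ^ k * (1 - r))) := by
        have e1 : (2:ℝ) ^ ((-(m + N)) * (k:ℝ)) = r ^ k := by
          rw [Real.rpow_mul two_pos.le, Real.rpow_natCast]
        have e2 : (2:ℝ) ^ (((k:ℝ) + 1) * m) * (E * ((2:ℝ) ^ ((-(m + N)) * (k:ℝ)) * ((1:ℝ)/2)))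
            = Cp * ((2:ℝ) ^ ((k:ℝ) * N))⁻¹ := by
          rw [hEdef, hhalf, ← Real.rpow_neg two_pos.le ((k:ℝ) * N)]
          calc (2:ℝ) ^ (((k:ℝ) + 1) * m) * ((2:ℝ) ^ (1 - m) * Cp
                * ((2:ℝ) ^ ((-(m + N)) * (k:ℝ)) * (2:ℝ) ^ (-1:ℝ)))
              = Cp * ((2:ℝ) ^ (((k:ℝ) + 1) * m) * (2:ℝ) ^ (1 - m)
                * (2:ℝ) ^ ((-(m + N)) * (k:ℝ)) * (2:ℝ) ^ (-1:ℝ)) := by ring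
            _ = Cp * (2:ℝ) ^ ((((k:ℝ) + 1) * m) + (1 - m) + (-(m + N)) * (k:ℝ) + (-1)) := by
                rw [two_rpow_mul_eq, two_rpow_mul_eq, two_rpow_mul_eq]
            _ = Cp * (2:ℝ) ^ (-((k:ℝ) * N)) := by ring_nf
        have hrk : (0:ℝ) < r ^ k := pow_pos hr0 k
        have hPm : (0:ℝ) < (2:ℝ) ^ (((k:ℝ) + 1) * m) := Real.rpow_pos_of_pos two_pos _
        have hmono : (2:ℝ) ^ (((k:ℝ) + 1) * m) * (E * (r ^ k * ((1:ℝ)/2)))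
            ≤ (2:ℝ) ^ (((k:ℝ) + 1) * m) * (E * (r ^ k * (1 - r))) := by
          apply mul_le_mul_of_nonneg_left _ hPm.le
          apply mul_le_mul_of_nonneg_left _ hE0
          apply mul_le_mul_of_nonneg_left _ hrk.le
          linarith
        calc Cp * ((2:ℝ) ^ ((k:ℝ) * N))⁻¹
            = (2:ℝ) ^ (((k:ℝ) + 1) * m) * (E * (r ^ k * ((1:ℝ)/2))) := by
              rw [← e2, e1]
          _ ≤ _ := hmono
      -- assemble
      have hA : (2:ℝ) ^ m * (2:ℝ) ^ ((k:ℝ) * m) = (2:ℝ) ^ ((((k:ℕ)+1:ℕ):ℝ) * m) := by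
        rw [two_rpow_mul_eq]; push_cast; ring_nf
      have hmul : (2:ℝ) ^ m * ‖B (dil d ((2:ℝ) ^ k) η)‖
          ≤ (2:ℝ) ^ m * ((2:ℝ) ^ ((k:ℝ) * m) * (C1 + E * (1 - r ^ k))) :=
        mul_le_mul_of_nonneg_left ihk (Real.rpow_nonneg two_pos.le m)
      have heq2 : (2:ℝ) ^ m * ((2:ℝ) ^ ((k:ℝ) * m) * (C1 + E * (1 - r ^ k)))
          = (2:ℝ) ^ (((k:ℝ) + 1) * m) * (C1 + E * (1 - r ^ k)) := by
        rw [← mul_assoc, two_rpow_mul_eq]; ring_nf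
      have hfin : (2:ℝ) ^ (((k:ℝ) + 1) * m) * (C1 + E * (1 - r ^ k))
            + (2:ℝ) ^ (((k:ℝ) + 1) * m) * (E * (r ^ k * (1 - r)))
          = (2:ℝ) ^ (((k:ℝ) + 1) * m) * (C1 + E * (1 - r ^ (k+1))) := by
        rw [pow_succ]; ring
      have hcast : (2:ℝ) ^ ((((k:ℕ)+1:ℕ):ℝ) * m) = (2:ℝ) ^ (((k:ℝ) + 1) * m) := by
        push_cast; ring_nf
      rw [hcast] at hA
      show _ ≤ (2:ℝ) ^ ((((k:ℕ)+1:ℕ):ℝ) * m) * _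
      rw [hcast]
      linarith [hstep, hψb, hCkey, hmul, heq2, hfin]
  -- conclusion
  refine ⟨max (C1 * (2:ℝ) ^ |m|) ((C1 + E) * (2:ℝ) ^ (2*|m|)), ?_, fun η => ?_⟩
  · exact le_max_iff.2 (Or.inl (by positivity))
  set t := hnorm d η with htdef
  have ht0 : 0 ≤ t := hnorm_nonneg η
  rcases le_or_gt t 1 with hle | hgt
  · -- small region
    have hb : (2:ℝ) ^ (-|m|) ≤ (1 + t) ^ m := by
      rcases le_or_gt 0 m with hm | hm
      · have h1 : (1:ℝ) ≤ (1 + t) ^ m := by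
          calc (1:ℝ) = (1:ℝ) ^ m := (Real.one_rpow m).symm
            _ ≤ (1 + t) ^ m := Real.rpow_le_rpow zero_le_one (by linarith) hm
        have h2 : (2:ℝ) ^ (-|m|) ≤ 1 :=
          Real.rpow_le_one_of_one_le_of_nonpos one_le_two (by simp [abs_nonneg])
        linarith
      · have habs : -|m| = m := by rw [abs_of_neg hm]; ring
        rw [habs]
        exact Real.rpow_le_rpow_of_nonpos (by linarith) (by linarith) hm.le
    have hB1 : ‖B η‖ ≤ C1 := hball η (by linarith)
    have hpos : (0:ℝ) < (2:ℝ) ^ |m| := Real.rpow_pos_of_pos two_pos _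
    calc ‖B η‖ ≤ C1 := hB1
      _ = C1 * (2:ℝ) ^ |m| * (2:ℝ) ^ (-|m|) := by
          rw [mul_assoc, two_rpow_mul_eq, add_neg_cancel, Real.rpow_zero, mul_one]
      _ ≤ C1 * (2:ℝ) ^ |m| * (1 + t) ^ m :=
          mul_le_mul_of_nonneg_left hb (by positivity)
      _ ≤ max (C1 * (2:ℝ) ^ |m|) ((C1 + E) * (2:ℝ) ^ (2*|m|)) * (1 + t) ^ m := by
          apply mul_le_mul_of_nonneg_right (le_max_left _ _)
            (Real.rpow_nonneg (by linarith) m)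
  · -- large region : dyadic decomposition
    have hfl1 : 1 ≤ ⌊t⌋₊ := Nat.le_floor (by exact_mod_cast hgt.le)
    set k : ℕ := Nat.log 2 ⌊t⌋₊ with hkdef
    have hk1 : ((2:ℝ) ^ k) ≤ t := by
      have h1 : (2:ℕ) ^ k ≤ ⌊t⌋₊ := Nat.pow_log_le_self 2 (by omega)
      have h2 : ((⌊t⌋₊:ℕ):ℝ) ≤ t := Nat.floor_le ht0
      calc ((2:ℝ) ^ k) = (((2:ℕ) ^ k : ℕ) : ℝ) := by push_cast; ring
        _ ≤ ((⌊t⌋₊:ℕ):ℝ) := by exact_mod_cast h1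
        _ ≤ t := h2
    have hk2 : t < (2:ℝ) ^ (k+1) := by
      have h1 : ⌊t⌋₊ < 2 ^ (k+1) := Nat.lt_pow_succ_log_self (by norm_num) _
      have h2 : t < (⌊t⌋₊ : ℝ) + 1 := Nat.lt_floor_add_one t
      have h3 : ((⌊t⌋₊ : ℕ):ℝ) + 1 ≤ ((2:ℕ) ^ (k+1) : ℕ) := by exact_mod_cast h1
      calc t < (⌊t⌋₊ : ℝ) + 1 := h2
        _ ≤ (((2:ℕ) ^ (k+1) : ℕ) : ℝ) := h3
        _ = (2:ℝ) ^ (k+1) := by push_cast; ring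
    have hpk : (0:ℝ) < (2:ℝ) ^ k := by positivity
    set ω := dil d ((2:ℝ) ^ k)⁻¹ η with hωdef
    have hω : dil d ((2:ℝ) ^ k) ω = η := by
      rw [hωdef, dil_dil, mul_inv_cancel₀ (ne_of_gt hpk), dil_one]
    have hωn : hnorm d ω = ((2:ℝ) ^ k)⁻¹ * t := hnorm_dil hd (by positivity) η
    have hω1 : 1 ≤ hnorm d ω := by
      rw [hωn, le_inv_mul_iff₀ hpk]; simpa using hk1
    have hω2 : hnorm d ω ≤ 2 := by
      rw [hωn]
      rw [inv_mul_le_iff₀ hpk]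
      calc t ≤ (2:ℝ) ^ (k+1) := hk2.le
        _ = (2:ℝ) ^ k * 2 := by rw [pow_succ]
    have hm1 := main k ω hω1 hω2
    rw [hω] at hm1
    have hm2 : ‖B η‖ ≤ (2:ℝ) ^ ((k:ℝ) * m) * (C1 + E) := by
      have hrk : (0:ℝ) ≤ r ^ k := (pow_pos hr0 k).le
      have : C1 + E * (1 - r ^ k) ≤ C1 + E := by nlinarith
      calc ‖B η‖ ≤ (2:ℝ) ^ ((k:ℝ) * m) * (C1 + E * (1 - r ^ k)) := hm1
        _ ≤ (2:ℝ) ^ ((k:ℝ) * m) * (C1 + E) :=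
            mul_le_mul_of_nonneg_left this (Real.rpow_nonneg two_pos.le _)
    have hgrow : (2:ℝ) ^ ((k:ℝ) * m) ≤ (2:ℝ) ^ (2*|m|) * (1 + t) ^ m := by
      have e1 : (2:ℝ) ^ ((k:ℝ) * m) = ((2:ℝ) ^ k) ^ m := by
        rw [Real.rpow_mul two_pos.le, Real.rpow_natCast]
      rcases le_or_gt 0 m with hm | hm
      · have h1 : ((2:ℝ) ^ k) ^ m ≤ (1 + t) ^ m :=
          Real.rpow_le_rpow hpk.le (by linarith) hm
        have h2 : (2:ℝ) ^ (0:ℝ) ≤ (2:ℝ) ^ (2*|m|) :=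
          Real.rpow_le_rpow_of_exponent_le one_le_two (by positivity)
        rw [Real.rpow_zero] at h2
        have h3 : (0:ℝ) ≤ (1 + t) ^ m := Real.rpow_nonneg (by linarith) m
        rw [e1]
        exact h1.trans (le_mul_of_one_le_left h3 h2)
      · have h1p : (1:ℝ) ≤ (2:ℝ) ^ (k+1) := one_le_pow₀ one_le_two
        have h1t : 1 + t ≤ (2:ℝ) ^ (k+2) := by
          have e : (2:ℝ) ^ (k+2) = (2:ℝ) ^ (k+1) * 2 := by rw [pow_succ]
          rw [e]
          linarith only [hk2, h1p]
        have hp2 : (0:ℝ) < 1 + t := by linarith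
        have h2 : ((2:ℝ) ^ (k+2)) ^ m ≤ (1 + t) ^ m :=
          Real.rpow_le_rpow_of_nonpos hp2 h1t hm.le
        have e3 : ((2:ℝ) ^ (k+2)) ^ m = (2:ℝ) ^ (((k:ℝ)+2)*m) := by
          rw [← Real.rpow_natCast 2 (k+2), ← Real.rpow_mul two_pos.le]
          push_cast; ring_nf
        have e4 : (2:ℝ) ^ (((k:ℝ)+2)*m) = (2:ℝ) ^ ((k:ℝ)*m) * (2:ℝ) ^ (2*m) := by
          rw [two_rpow_mul_eq]; congr 1; ring
        have h3 : (2:ℝ) ^ ((k:ℝ)*m) * (2:ℝ) ^ (2*m) ≤ (1 + t) ^ m := by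
          rw [← e4, ← e3]; exact h2
        have h4 : (2:ℝ) ^ (2*|m|) * ((2:ℝ) ^ ((k:ℝ)*m) * (2:ℝ) ^ (2*m))
            ≤ (2:ℝ) ^ (2*|m|) * (1 + t) ^ m :=
          mul_le_mul_of_nonneg_left h3 (Real.rpow_nonneg two_pos.le _)
        have h5 : (2:ℝ) ^ (2*|m|) * ((2:ℝ) ^ ((k:ℝ)*m) * (2:ℝ) ^ (2*m))
            = (2:ℝ) ^ ((k:ℝ)*m) := by
          rw [two_rpow_mul_eq, two_rpow_mul_eq, abs_of_neg hm]
          congr 1; ring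
        linarith only [h4, h5]
    calc ‖B η‖ ≤ (2:ℝ) ^ ((k:ℝ) * m) * (C1 + E) := hm2
      _ ≤ ((2:ℝ) ^ (2*|m|) * (1 + t) ^ m) * (C1 + E) :=
          mul_le_mul_of_nonneg_right hgrow (by linarith)
      _ = ((C1 + E) * (2:ℝ) ^ (2*|m|)) * (1 + t) ^ m := by ring
      _ ≤ max (C1 * (2:ℝ) ^ |m|) ((C1 + E) * (2:ℝ) ^ (2*|m|)) * (1 + t) ^ m :=
          mul_le_mul_of_nonneg_right (le_max_right _ _) (Real.rpow_nonneg (by linarith) m)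

lemma mono_bound {d : Fin n → ℕ} (hd : ∀ i, 1 ≤ d i) (a : Fin n → ℕ) (η : Fin n → ℝ) :
    |mono a η| ≤ (1 + hnorm d η) ^ (horder d a) := by
  have h0 : 0 ≤ hnorm d η := hnorm_nonneg η
  calc |mono a η| = ∏ i, |η i| ^ a i := by
        rw [mono, Finset.abs_prod]
        exact Finset.prod_congr rfl fun i _ => abs_pow _ _
    _ ≤ ∏ i, (1 + hnorm d η) ^ (a i * d i) := by
        apply Finset.prod_le_prod (fun i _ => by positivity)
        intro i _
        calc |η i| ^ a i ≤ (hnorm d η ^ d i) ^ a i :=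
              pow_le_pow_left₀ (abs_nonneg _) (abs_le_hnorm_pow hd η i) _
          _ = hnorm d η ^ (a i * d i) := by rw [← pow_mul, mul_comm]
          _ ≤ (1 + hnorm d η) ^ (a i * d i) :=
              pow_le_pow_left₀ h0 (by linarith) _
    _ = (1 + hnorm d η) ^ (horder d a) := by
        simp only [horder, ← Finset.prod_pow_eq_pow_sum]

theorem stmt2 {n : ℕ} (d : Fin n → ℕ) (hd : ∀ i, 1 ≤ d i) (m : ℝ)
    (B : (Fin n → ℝ) → ℂ) (hB : ContDiff ℝ (⊤ : ℕ∞) B)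
    (hhom : ∀ lam : ℝ, 0 < lam → ∃ ψ : SchwartzMap (Fin n → ℝ) ℂ,
      ∀ η, B (dil d lam η) - ((lam ^ m : ℝ) : ℂ) * B η = ψ η) :
    ∀ a b : Fin n → ℕ, ∃ C : ℝ, 0 ≤ C ∧ ∀ η : Fin n → ℝ,
      ‖(mono a η : ℂ) * mpd b B η‖ ≤
        C * (1 + hnorm d η) ^ (m + (horder d a : ℝ) - (horder d b : ℝ)) := by
  intro a b
  have hGood : Good d m B := ⟨hB, hhom⟩
  have e : (((List.map (fun i => b i * d i) (List.finRange n)).sum : ℕ) : ℝ)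
      = ((horder d b : ℕ) : ℝ) := by
    have : horder d b = (List.map (fun i => b i * d i) (List.finRange n)).sum := by
      rw [horder, Fin.sum_univ_def]
    rw [this]
  have hgb : Good d (m - (horder d b : ℝ)) (mpd b B) := by
    rw [← e]
    exact hGood.foldr hd b (List.finRange n)
  obtain ⟨C, hC0, hC⟩ := bound_of_good hd hgb
  refine ⟨C, hC0, fun η => ?_⟩
  have h0 : 0 ≤ hnorm d η := hnorm_nonneg η
  have hpos : (0:ℝ) < 1 + hnorm d η := by linarith
  have h1 : ‖(mono a η : ℂ) * mpd b B η‖ = |mono a η| * ‖mpd b B η‖ := by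
    rw [norm_mul, Complex.norm_real, Real.norm_eq_abs]
  calc ‖(mono a η : ℂ) * mpd b B η‖
      = |mono a η| * ‖mpd b B η‖ := h1
    _ ≤ (1 + hnorm d η) ^ (horder d a)
        * (C * (1 + hnorm d η) ^ (m - (horder d b : ℝ))) :=
        mul_le_mul (mono_bound hd a η) (hC η) (norm_nonneg _) (by positivity)
    _ = C * (1 + hnorm d η) ^ (m + (horder d a : ℝ) - (horder d b : ℝ)) := by
        rw [← Real.rpow_natCast (1 + hnorm d η) (horder d a), ← mul_assoc,
          mul_comm ((1 + hnorm d η) ^ ((horder d a : ℕ) : ℝ)) C, mul_assoc,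
          ← Real.rpow_add hpos]
        congr 1
        ring
end

section
/- Let E be a real Banach space, let m be a real number, and let T : (0,∞) → (E ≃L[ℝ] E) be a monoid homomorphism from the multiplicative group of positive reals into the continuous linear automorphisms of E (so T_{λμ} = T_λ ∘ T_μ and T_1 = id) such that for every y ∈ E the orbit map λ ↦ T_λ(y) is infinitely differentiable on (0,∞). Let F : (0,∞) → E be continuous and satisfy the cocycle identity F(λμ) = λ^{−m} · T_λ(F(μ)) + F(λ) for all λ, μ > 0. Then F is infinitely differentiable on (0,∞). -/
open Set Metric MeasureTheory Filter
open scoped ContDiff Topology NNReal ENNReal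

theorem stmt9 {E : Type*} [NormedAddCommGroup E] [NormedSpace ℝ E] [CompleteSpace E]
    (m : ℝ) (T : ℝ → (E ≃L[ℝ] E))
    (hT1 : ∀ y : E, T 1 y = y)
    (hTmul : ∀ lam mu : ℝ, 0 < lam → 0 < mu → ∀ y : E,
      T (lam * mu) y = T lam (T mu y))
    (hTorbit : ∀ y : E, ContDiffOn ℝ (⊤ : ℕ∞) (fun lam => T lam y) (Set.Ioi (0 : ℝ)))
    (F : ℝ → E) (hF : ContinuousOn F (Set.Ioi (0 : ℝ)))
    (hcocycle : ∀ lam mu : ℝ, 0 < lam → 0 < mu →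
      F (lam * mu) = (lam ^ (-m) : ℝ) • T lam (F mu) + F lam) :
    ContDiffOn ℝ (⊤ : ℕ∞) F (Set.Ioi (0 : ℝ)) := by
  -- interval integrability of `F` on positive intervals
  have hFint : ∀ a b : ℝ, 0 < a → 0 < b → IntervalIntegrable F volume a b := by
    intro a b ha hb
    apply ContinuousOn.intervalIntegrable
    apply hF.mono
    intro x hx
    exact lt_of_lt_of_le (lt_min ha hb) hx.1
  set c : E := ∫ t in (1 : ℝ)..2, F t with hc
  set Φ : ℝ → E := fun x => ∫ t in (1 : ℝ)..x, F t with hΦ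
  have hΦd : ∀ x ∈ Ioi (0 : ℝ), HasDerivAt Φ (F x) x := by
    intro x hx
    exact intervalIntegral.integral_hasDerivAt_right (hFint 1 x one_pos hx)
      (ContinuousOn.stronglyMeasurableAtFilter isOpen_Ioi hF x hx)
      (hF.continuousAt (isOpen_Ioi.mem_nhds hx))
  -- the key smoothing identity
  have key : ∀ lam ∈ Ioi (0 : ℝ),
      F lam = lam⁻¹ • (Φ (2 * lam) - Φ lam) - (lam ^ (-m) : ℝ) • T lam c := by
    intro lam hlam
    have hlam' : (0 : ℝ) < lam := hlam
    have h1 : (∫ t in (1 : ℝ)..2, F (lam * t))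
        = (lam ^ (-m) : ℝ) • T lam c + F lam := by
      have hcg : ∀ t ∈ uIcc (1 : ℝ) 2,
          F (lam * t) = (lam ^ (-m) : ℝ) • T lam (F t) + F lam := by
        intro t ht
        rw [uIcc_of_le (by norm_num)] at ht
        exact hcocycle lam t hlam' (lt_of_lt_of_le one_pos ht.1)
      rw [intervalIntegral.integral_congr hcg]
      have hFc : ContinuousOn F (uIcc (1 : ℝ) 2) := by
        apply hF.mono
        intro x hx
        rw [uIcc_of_le (by norm_num)] at hx
        exact lt_of_lt_of_le one_pos hx.1
      have hi1 : IntervalIntegrable (fun t => (lam ^ (-m) : ℝ) • T lam (F t)) volume 1 2 :=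
        (((T lam).continuous.comp_continuousOn hFc).const_smul
          ((lam ^ (-m) : ℝ))).intervalIntegrable
      rw [intervalIntegral.integral_add hi1 intervalIntegrable_const]
      congr 1
      · rw [intervalIntegral.integral_smul]
        congr 1
        exact ((T lam).toContinuousLinearMap.intervalIntegral_comp_comm
          (hFint 1 2 one_pos two_pos))
      · rw [intervalIntegral.integral_const]
        norm_num
    have h2 : (∫ t in (1 : ℝ)..2, F (lam * t)) = lam⁻¹ • ∫ t in lam..(2 * lam), F t := by
      rw [intervalIntegral.integral_comp_mul_left F hlam'.ne']
      ring_nf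
    have h3 : (∫ t in lam..(2 * lam), F t) = Φ (2 * lam) - Φ lam :=
      (intervalIntegral.integral_interval_sub_left
        (hFint 1 (2 * lam) one_pos (by linarith)) (hFint 1 lam one_pos hlam')).symm
    rw [← h3, ← h2, h1]
    abel
  -- differentiability of F on `Ioi 0`
  have hFd : ∀ x ∈ Ioi (0 : ℝ), DifferentiableAt ℝ F x := by
    intro x hx
    have hev : F =ᶠ[𝓝 x]
        (fun lam => lam⁻¹ • (Φ (2 * lam) - Φ lam) - (lam ^ (-m) : ℝ) • T lam c) :=
      eventually_of_mem (isOpen_Ioi.mem_nhds hx) key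
    rw [hev.differentiableAt_iff]
    have h2x : (2 : ℝ) * x ∈ Ioi (0 : ℝ) := by
      simp only [mem_Ioi] at hx ⊢; linarith
    have d1 : DifferentiableAt ℝ (fun lam : ℝ => Φ (2 * lam)) x := by
      have := (hΦd (2 * x) h2x).differentiableAt.comp x
        ((differentiableAt_id.const_mul (2 : ℝ)))
      exact this
    have d2 : DifferentiableAt ℝ Φ x := (hΦd x hx).differentiableAt
    have d3 : DifferentiableAt ℝ (fun lam : ℝ => lam⁻¹) x :=
      differentiableAt_id.inv (ne_of_gt hx)
    have d4 : DifferentiableAt ℝ (fun lam : ℝ => (lam ^ (-m) : ℝ)) x :=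
      (Real.contDiffAt_rpow_const_of_ne (n := 1) (ne_of_gt hx)).differentiableAt one_ne_zero
    have d5 : DifferentiableAt ℝ (fun lam => T lam c) x :=
      (((hTorbit c).differentiableOn (by simp)).differentiableAt (isOpen_Ioi.mem_nhds hx))
    exact (d3.smul (d1.sub d2)).sub (d4.smul d5)
  -- the derivative identity F'(λ) = λ⁻¹ λ^{-m} • T_λ v
  set v : E := deriv F 1 with hv
  have hv1 : HasDerivAt F v 1 := (hFd 1 (Set.mem_Ioi.2 one_pos)).hasDerivAt
  have hF' : ∀ x ∈ Ioi (0 : ℝ),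
      HasDerivAt F ((x⁻¹ * (x ^ (-m) : ℝ)) • T x v) x := by
    intro lam hlam
    have hlam' : (0 : ℝ) < lam := hlam
    set dF : E := deriv F lam with hdF
    have hdFd : HasDerivAt F dF lam := (hFd lam hlam).hasDerivAt
    -- left side derivative
    have hmul : HasDerivAt (fun mu : ℝ => lam * mu) lam 1 := by
      simpa using (hasDerivAt_id (1 : ℝ)).const_mul lam
    have hL : HasDerivAt (fun mu : ℝ => F (lam * mu)) (lam • dF) 1 := by
      have h0 : HasDerivAt F dF (lam * 1) := by rwa [mul_one]
      exact h0.scomp 1 hmul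
    -- right side derivative
    have hR : HasDerivAt (fun mu : ℝ => (lam ^ (-m) : ℝ) • T lam (F mu) + F lam)
        ((lam ^ (-m) : ℝ) • T lam v) 1 := by
      have hTv : HasDerivAt (fun mu : ℝ => T lam (F mu))
          ((T lam).toContinuousLinearMap v) 1 :=
        (T lam).toContinuousLinearMap.hasFDerivAt.comp_hasDerivAt 1 hv1
      exact (hTv.const_smul ((lam ^ (-m) : ℝ))).add_const (F lam)
    have heq : (fun mu : ℝ => F (lam * mu))
        =ᶠ[𝓝 (1 : ℝ)] (fun mu : ℝ => (lam ^ (-m) : ℝ) • T lam (F mu) + F lam) := by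
      filter_upwards [isOpen_Ioi.mem_nhds (Set.mem_Ioi.2 one_pos)] with mu hmu
      exact hcocycle lam mu hlam' hmu
    have hL' : HasDerivAt (fun mu : ℝ => (lam ^ (-m) : ℝ) • T lam (F mu) + F lam)
        (lam • dF) 1 := hL.congr_of_eventuallyEq heq.symm
    have huniq : lam • dF = (lam ^ (-m) : ℝ) • T lam v := hL'.unique hR
    have hsolve : dF = (lam⁻¹ * (lam ^ (-m) : ℝ)) • T lam v := by
      have := congrArg (fun z => lam⁻¹ • z) huniq
      simpa [smul_smul, inv_mul_cancel₀ hlam'.ne'] using this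
    rw [← hsolve]
    exact hdFd
  -- the derivative is analytic
  have hganal : ContDiffOn ℝ ∞
      (fun x : ℝ => (x⁻¹ * (x ^ (-m) : ℝ)) • T x v) (Ioi (0 : ℝ)) := by
    intro x hx
    have h1 : ContDiffAt ℝ ∞ (fun y : ℝ => y⁻¹) x := contDiffAt_inv ℝ (ne_of_gt hx)
    have h2 : ContDiffAt ℝ ∞ (fun y : ℝ => (y ^ (-m) : ℝ)) x :=
      Real.contDiffAt_rpow_const_of_ne (n := ∞) (ne_of_gt hx)
    have h3 : ContDiffAt ℝ ∞ (fun y => T y v) x :=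
      (hTorbit v).contDiffAt (isOpen_Ioi.mem_nhds hx)
    exact ((h1.mul h2).smul h3).contDiffWithinAt
  -- conclude
  rw [contDiffOn_infty_iff_deriv_of_isOpen isOpen_Ioi]
  refine ⟨fun x hx => (hFd x hx).differentiableWithinAt, ?_⟩
  exact hganal.congr fun x hx => (hF' x hx).deriv
end
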